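/- arXiv:1612.08656 — 8 statements merged into one kernel-verified Lean document; each statement's English description precedes it below -/
import Mathlib

section
/- Let n, m, l, d be positive integers, A : ℂⁿ → ℂᵐ a linear map, R_t : ℂⁿ → ℂˡ linear maps for t = 0,…,d−1, f ∈ ℝᵐ with f(j) ≥ 0 for all j, and τ, η > 0. Define Υ(u, D, α) = (1/2)·Σ_{t<d} ‖D·α_t − R_t u‖² + τ·‖α‖₀ + (η/2)·Σ_{j<m} ( |(Au)(j)|² − f(j)·log(|(Au)(j)|²) ) for u ∈ ℂⁿ, D ∈ M_l(ℂ), α ∈ M_{l×d}(ℂ) with columns α_t. Assume there exists c > 0 such that c·‖u‖ ≤ ‖Au‖ for all u ∈ ℂⁿ. If (u^k, D^k, α^k) is a sequence such that every D^k is unitary ((D^k)ᴴ D^k = I) and Υ(u^k, D^k, α^k) ≤ C for all k and some constant C, then there exists M such that ‖u^k‖ ≤ M and ‖α^k‖_F ≤ M for all k. -/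
open Matrix

/-- The isotropic `L⁰` pseudo-norm of a complex matrix: the number of its nonzero
entries, as a real number. -/
noncomputable def isoL0 {c d : ℕ} (α : Matrix (Fin c) (Fin d) ℂ) : ℝ :=
  (Nat.card {p : Fin c × Fin d // α p.1 p.2 ≠ 0} : ℝ)

/-!
The Poisson data-fitting term is coercive: since `x - f log x ≥ x / 2 - const` for `x ≥ 0`, the
bound on the objective bounds `‖A u‖²`, hence `‖u‖` by the lower frame bound `c ‖u‖ ≤ ‖A u‖`, and it
also bounds the patch term `∑ₜ ‖D αₜ - Rₜ u‖²`. A unitary `D` preserves norms, so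
`‖αₜ‖ ≤ ‖D αₜ - Rₜ u‖ + ‖Rₜ‖ ‖u‖`, which bounds the Frobenius norm of `α`.
-/

open Real

/-- `x / 2 - f log x` is minimal at `x = 2 f`. -/
theorem mul_log_le_div_two_add {f x : ℝ} (hf : 0 ≤ f) (hx : 0 < x) :
    f * log x ≤ x / 2 + (f * log (2 * f) - f) := by
  rcases hf.eq_or_lt with rfl | hf
  · simp only [zero_mul, mul_zero, log_zero, sub_zero, add_zero]; positivity
  have hlog : log x - log (2 * f) ≤ x / (2 * f) - 1 := by
    rw [← log_div hx.ne' (by positivity)]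
    exact log_le_sub_one_of_pos (by positivity)
  calc f * log x ≤ f * (x / (2 * f) - 1 + log (2 * f)) := by gcongr; linarith
    _ = x / 2 + (f * log (2 * f) - f) := by field_simp; ring

theorem exists_sq_norm_div_two_sub_le_sum_sq_norm_sub_mul_log {𝕜 ι : Type*} [RCLike 𝕜]
    [Fintype ι] (f : ι → ℝ) (hf : ∀ j, 0 ≤ f j) :
    ∃ B, ∀ w : EuclideanSpace 𝕜 ι,
      ‖w‖ ^ 2 / 2 - B ≤ ∑ j, (‖w j‖ ^ 2 - f j * log (‖w j‖ ^ 2)) := by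
  -- The `max` handles entries `w j = 0`, where `log 0 = 0`.
  refine ⟨∑ j, max (f j * log (2 * f j) - f j) 0, fun w => ?_⟩
  rw [EuclideanSpace.norm_sq_eq, Finset.sum_div, ← Finset.sum_sub_distrib]
  refine Finset.sum_le_sum fun j _ => ?_
  rcases (sq_nonneg ‖w j‖).eq_or_lt with hw | hw
  · simp [← hw]
  · linarith [mul_log_le_div_two_add (hf j) hw, le_max_left (f j * log (2 * f j) - f j) 0]

theorem Matrix.norm_mulVec_of_conjTranspose_mul_self_eq_one {𝕜 ι : Type*} [RCLike 𝕜]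
    [Fintype ι] [DecidableEq ι] {D : Matrix ι ι 𝕜} (hD : Dᴴ * D = 1) (v : ι → 𝕜) :
    ‖(EuclideanSpace.equiv ι 𝕜).symm (D *ᵥ v)‖ = ‖(EuclideanSpace.equiv ι 𝕜).symm v‖ := by
  have hU : toEuclideanCLM (𝕜 := 𝕜) D ∈ unitary _ :=
    Unitary.map_mem _ ((mem_unitaryGroup_iff' (A := D)).2 hD)
  exact ContinuousLinearMap.norm_map_of_mem_unitary hU _

theorem Matrix.sum_sq_norm_le_of_conjTranspose_mul_self_eq_one {𝕜 ι κ : Type*} [RCLike 𝕜]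
    [Fintype ι] [DecidableEq ι] [Fintype κ] {D : Matrix ι ι 𝕜} (hD : Dᴴ * D = 1)
    (α : Matrix ι κ 𝕜) (r : κ → EuclideanSpace 𝕜 ι) :
    ∑ s, ∑ t, ‖α s t‖ ^ 2 ≤
      2 * ∑ t, ‖(EuclideanSpace.equiv ι 𝕜).symm (D *ᵥ fun s => α s t) - r t‖ ^ 2 +
        2 * ∑ t, ‖r t‖ ^ 2 := by
  rw [Finset.sum_comm, Finset.mul_sum, Finset.mul_sum, ← Finset.sum_add_distrib]
  refine Finset.sum_le_sum fun t _ => ?_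
  set x := (EuclideanSpace.equiv ι 𝕜).symm (D *ᵥ fun s => α s t)
  calc ∑ s, ‖α s t‖ ^ 2 = ‖x‖ ^ 2 := by
        rw [norm_mulVec_of_conjTranspose_mul_self_eq_one hD, EuclideanSpace.norm_sq_eq]
        rfl
    _ ≤ (‖x - r t‖ + ‖r t‖) ^ 2 := by gcongr; exact norm_le_norm_sub_add x (r t)
    _ ≤ 2 * ‖x - r t‖ ^ 2 + 2 * ‖r t‖ ^ 2 := add_sq_le.trans_eq (by ring)

theorem le_and_le_of_half_add_add_half_mul_le {a b x y B C η : ℝ} (hη : 0 < η) (ha : 0 ≤ a)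
    (hb : 0 ≤ b) (hx : 0 ≤ x) (hy : x / 2 - B ≤ y) (h : 1 / 2 * a + b + η / 2 * y ≤ C) :
    a ≤ 2 * C + η * B ∧ x ≤ 4 * C / η + 2 * B := by
  have hηy : η * (x / 2 - B) ≤ η * y := mul_le_mul_of_nonneg_left hy hη.le
  refine ⟨by nlinarith, ?_⟩
  rw [div_add' _ _ _ hη.ne', le_div_iff₀ hη]
  nlinarith

theorem dicpr_iterates_bounded_general {n m l d : ℕ}
    (A : EuclideanSpace ℂ (Fin n) →ₗ[ℂ] EuclideanSpace ℂ (Fin m))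
    (R : Fin d → (EuclideanSpace ℂ (Fin n) →ₗ[ℂ] EuclideanSpace ℂ (Fin l)))
    (f : Fin m → ℝ) (hf : ∀ j, 0 ≤ f j)
    (τ η : ℝ) (hτ : 0 < τ) (hη : 0 < η)
    (c : ℝ) (hc : 0 < c) (hA : ∀ u : EuclideanSpace ℂ (Fin n), c * ‖u‖ ≤ ‖A u‖)
    (C : ℝ)
    (u : ℕ → EuclideanSpace ℂ (Fin n))
    (D : ℕ → Matrix (Fin l) (Fin l) ℂ)
    (α : ℕ → Matrix (Fin l) (Fin d) ℂ)
    (hD : ∀ k, (D k)ᴴ * D k = 1)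
    (hC : ∀ k,
      (1 / 2) * ∑ t : Fin d,
          ‖(EuclideanSpace.equiv (Fin l) ℂ).symm ((D k).mulVec fun s => α k s t)
              - R t (u k)‖ ^ 2
        + τ * isoL0 (α k)
        + (η / 2) * ∑ j : Fin m,
            (‖A (u k) j‖ ^ 2
              - f j * Real.log (‖A (u k) j‖ ^ 2)) ≤ C) :
    ∃ M : ℝ, ∀ k, ‖u k‖ ≤ M ∧
      Real.sqrt (∑ s : Fin l, ∑ t : Fin d, ‖α k s t‖ ^ 2) ≤ M := by
  obtain ⟨B, hB⟩ := exists_sq_norm_div_two_sub_le_sum_sq_norm_sub_mul_log (𝕜 := ℂ) f hf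
  have hsplit k := le_and_le_of_half_add_add_half_mul_le hη (by positivity)
    (mul_nonneg hτ.le (Nat.cast_nonneg _)) (sq_nonneg _) (hB (A (u k))) (hC k)
  set Mu := √(4 * C / η + 2 * B) / c
  have hu k : ‖u k‖ ≤ Mu :=
    (le_div_iff₀' hc).2 <| (hA (u k)).trans <| le_sqrt_of_sq_le (hsplit k).2
  refine ⟨max Mu √(2 * (2 * C + η * B) + 2 * ∑ t, (‖(R t).toContinuousLinearMap‖ * Mu) ^ 2),
    fun k => ⟨(hu k).trans (le_max_left _ _), (le_max_right _ _).trans' (sqrt_le_sqrt ?_)⟩⟩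
  calc _ ≤ _ := Matrix.sum_sq_norm_le_of_conjTranspose_mul_self_eq_one (hD k) (α k)
        fun t => R t (u k)
    _ ≤ _ := by
      gcongr with t
      · exact (hsplit k).1
      · exact (R t).toContinuousLinearMap.le_opNorm_of_le (hu k)

/-- Boundedness of the iterates for the dictionary learning phase retrieval (DicPR)
objective: if every dictionary iterate is unitary and the objective values are
uniformly bounded, then the image iterates and coefficient iterates are bounded. -/
theorem dicpr_iterates_bounded {n m l d : ℕ} (hn : 0 < n) (hm : 0 < m) (hl : 0 < l)
    (hd : 0 < d)
    (A : EuclideanSpace ℂ (Fin n) →ₗ[ℂ] EuclideanSpace ℂ (Fin m))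
    (R : Fin d → (EuclideanSpace ℂ (Fin n) →ₗ[ℂ] EuclideanSpace ℂ (Fin l)))
    (f : Fin m → ℝ) (hf : ∀ j, 0 ≤ f j)
    (τ η : ℝ) (hτ : 0 < τ) (hη : 0 < η)
    (c : ℝ) (hc : 0 < c) (hA : ∀ u : EuclideanSpace ℂ (Fin n), c * ‖u‖ ≤ ‖A u‖)
    (C : ℝ)
    (u : ℕ → EuclideanSpace ℂ (Fin n))
    (D : ℕ → Matrix (Fin l) (Fin l) ℂ)
    (α : ℕ → Matrix (Fin l) (Fin d) ℂ)
    (hD : ∀ k, (D k)ᴴ * D k = 1)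
    (hC : ∀ k,
      (1 / 2) * ∑ t : Fin d,
          ‖(EuclideanSpace.equiv (Fin l) ℂ).symm ((D k).mulVec fun s => α k s t)
              - R t (u k)‖ ^ 2
        + τ * isoL0 (α k)
        + (η / 2) * ∑ j : Fin m,
            (‖A (u k) j‖ ^ 2
              - f j * Real.log (‖A (u k) j‖ ^ 2)) ≤ C) :
    ∃ M : ℝ, ∀ k, ‖u k‖ ≤ M ∧
      Real.sqrt (∑ s : Fin l, ∑ t : Fin d, ‖α k s t‖ ^ 2) ≤ M :=
  dicpr_iterates_bounded_general A R f hf τ η hτ hη c hc hA C u D α hD hC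
end

section
/- Let m be a positive integer, f ∈ ℝᵐ with f(j) ≥ 0 for all j, and C ∈ ℝ. Then there exists M ∈ ℝ such that for every h ∈ ℝᵐ with h(j) ≥ 0 for all j and (1/2)·Σ_{j<m} ( h(j) − f(j)·log h(j) ) ≤ C, one has h(j) ≤ M for all j. -/
/-!
Each term satisfies `x - a log x ≥ x / 2 - c(a)` with `c(a)` depending only on `a = f j`, so
the sum dominates `h j / 2 - Σ c(f i)` for every `j`, and a bound on the sum bounds `h j`.
-/

/-- From `log y ≤ y - 1` at `y = x / (2a)`; the absolute value also covers `x = 0`, where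
`log 0 = 0`. -/
lemma Real.mul_log_le_half_add {a x : ℝ} (ha : 0 ≤ a) (hx : 0 ≤ x) :
    a * Real.log x ≤ x / 2 + a * |Real.log (2 * a)| := by
  have hbound : 0 ≤ a * |Real.log (2 * a)| := mul_nonneg ha (abs_nonneg _)
  rcases hx.eq_or_lt with rfl | hx
  · simpa using hbound
  rcases ha.eq_or_lt with rfl | ha
  · simp only [zero_mul]; positivity
  have hlog : Real.log x - Real.log (2 * a) ≤ x / (2 * a) - 1 := by
    rw [← Real.log_div hx.ne' (by positivity)]
    exact Real.log_le_sub_one_of_pos (by positivity)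
  have hscaled : a * (x / (2 * a) - 1) = x / 2 - a := by field_simp
  calc a * Real.log x
      = a * (Real.log x - Real.log (2 * a)) + a * Real.log (2 * a) := by ring
    _ ≤ (x / 2 - a) + a * |Real.log (2 * a)| := by
        rw [← hscaled]
        gcongr
        exact le_abs_self _
    _ ≤ x / 2 + a * |Real.log (2 * a)| := by linarith

theorem kl_sublevel_sets_bounded_general {m : ℕ} (f : Fin m → ℝ)
    (hf : ∀ j, 0 ≤ f j) (C : ℝ) :
    ∃ M : ℝ, ∀ h : Fin m → ℝ, (∀ j, 0 ≤ h j) →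
      (1 / 2) * (∑ j, (h j - f j * Real.log (h j))) ≤ C → ∀ j, h j ≤ M := by
  set c : Fin m → ℝ := fun i => f i * |Real.log (2 * f i)|
  refine ⟨4 * C + 2 * ∑ i, c i, fun h hh hB j => ?_⟩
  have hterm : ∑ i, (h i / 2 - c i) ≤ ∑ i, (h i - f i * Real.log (h i)) :=
    Finset.sum_le_sum fun i _ => by
      linarith [Real.mul_log_le_half_add (hf i) (hh i)]
  have hsingle : h j / 2 ≤ ∑ i, h i / 2 :=
    Finset.single_le_sum (f := fun i => h i / 2) (fun i _ => by linarith [hh i])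
      (Finset.mem_univ j)
  rw [Finset.sum_sub_distrib] at hterm
  linarith

/-- The sublevel sets of the Kullback–Leibler data-fitting term
`B(h, f) = (1/2) Σ_j (h j − f j · log (h j))` on the nonnegative orthant are bounded. -/
theorem kl_sublevel_sets_bounded {m : ℕ} (hm : 0 < m) (f : Fin m → ℝ)
    (hf : ∀ j, 0 ≤ f j) (C : ℝ) :
    ∃ M : ℝ, ∀ h : Fin m → ℝ, (∀ j, 0 ≤ h j) →
      (1 / 2) * (∑ j, (h j - f j * Real.log (h j))) ≤ C → ∀ j, h j ≤ M :=
  kl_sublevel_sets_bounded_general f hf C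
end

section
/- Let η > 0, r > 0, f ≥ 0 be real numbers and w ∈ ℂ with w ≠ 0. Define ρ = ( r·|w| + √( r²·|w|² + 4·η·(η+r)·f ) ) / ( 2·(η+r) ) and ẑ = ρ·(w/|w|). Then for every z ∈ ℂ with z ≠ 0, (η/2)·( |ẑ|² − f·log(|ẑ|²) ) + (r/2)·|ẑ − w|² ≤ (η/2)·( |z|² − f·log(|z|²) ) + (r/2)·|z − w|². In particular ẑ is a global minimizer over ℂ \ {0} of z ↦ (η/2)·( |z|² − f·log(|z|²) ) + (r/2)·|z − w|². -/
/-!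
Since `‖z - w‖ ≥ |‖z‖ - ‖w‖|`, with equality on the ray through `w`, the problem reduces to minimising the one-variable function
`q(s) = (η + r)/2 · s² - r‖w‖ · s - η f · log s` over `s > 0`. The positive root `ρ` of its
derivative satisfies `(η + r) ρ² = r‖w‖ ρ + η f`, and `log s - log ρ ≤ s/ρ - 1` then gives
`q(s) - q(ρ) ≥ (η + r)/2 · (s - ρ)²`.
-/

open Real

noncomputable section

def quadLog (c b d s : ℝ) : ℝ := c / 2 * s ^ 2 - b * s - d * log s

theorem quadLog_sub_quadLog_ge {c b d ρ s : ℝ} (hd : 0 ≤ d) (hρ : 0 < ρ) (hs : 0 < s)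
    (hroot : c * ρ ^ 2 = b * ρ + d) :
    c / 2 * (s - ρ) ^ 2 ≤ quadLog c b d s - quadLog c b d ρ := by
  have hlog : log s - log ρ ≤ s / ρ - 1 := by
    rw [← log_div hs.ne' hρ.ne']
    exact log_le_sub_one_of_pos (div_pos hs hρ)
  have hd_eq : d * (s / ρ - 1) = (c * ρ - b) * (s - ρ) := by
    field_simp
    linear_combination (ρ - s) * hroot
  unfold quadLog
  nlinarith [mul_le_mul_of_nonneg_left hlog hd]

theorem isMinOn_quadLog {c b d ρ : ℝ} (hc : 0 ≤ c) (hd : 0 ≤ d) (hρ : 0 < ρ)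
    (hroot : c * ρ ^ 2 = b * ρ + d) : IsMinOn (quadLog c b d) (Set.Ioi 0) ρ := fun s hs =>
  sub_nonneg.mp <| (by positivity : 0 ≤ c / 2 * (s - ρ) ^ 2).trans <|
    quadLog_sub_quadLog_ge hd hρ hs hroot

theorem mul_sq_eq_of_eq_add_sqrt_div {c b d ρ : ℝ} (hc : c ≠ 0) (hdisc : 0 ≤ b ^ 2 + 4 * c * d)
    (hρ : ρ = (b + √(b ^ 2 + 4 * c * d)) / (2 * c)) : c * ρ ^ 2 = b * ρ + d := by
  have hsq := sq_sqrt hdisc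
  generalize √(b ^ 2 + 4 * c * d) = S at hρ hsq
  subst hρ
  field_simp
  linear_combination hsq

def poissonProxObjective (η r f : ℝ) (w z : ℂ) : ℝ :=
  (η / 2) * (‖z‖ ^ 2 - f * log (‖z‖ ^ 2)) + (r / 2) * ‖z - w‖ ^ 2

theorem Complex.norm_ofReal_mul_div_norm {w : ℂ} (hw : w ≠ 0) (t : ℝ) :
    ‖(t : ℂ) * (w / (‖w‖ : ℂ))‖ = |t| := by
  rw [norm_mul, norm_div, Complex.norm_real, Complex.norm_real, norm_norm,
    div_self (norm_ne_zero_iff.mpr hw), mul_one, Real.norm_eq_abs]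

theorem poissonProxObjective_ofReal_mul_div_norm (η r f : ℝ) {w : ℂ} (hw : w ≠ 0) (t : ℝ) :
    poissonProxObjective η r f w ((t : ℂ) * (w / (‖w‖ : ℂ))) =
      quadLog (η + r) (r * ‖w‖) (η * f) t + r / 2 * ‖w‖ ^ 2 := by
  have hsub : (t : ℂ) * (w / (‖w‖ : ℂ)) - w = ((t - ‖w‖ : ℝ) : ℂ) * (w / (‖w‖ : ℂ)) := by
    have : (‖w‖ : ℂ) ≠ 0 := Complex.ofReal_ne_zero.mpr (norm_ne_zero_iff.mpr hw)
    push_cast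
    field_simp
  rw [poissonProxObjective, hsub, Complex.norm_ofReal_mul_div_norm hw,
    Complex.norm_ofReal_mul_div_norm hw, sq_abs, sq_abs, log_pow, quadLog]
  push_cast
  ring

theorem quadLog_norm_le_poissonProxObjective (η f : ℝ) {r : ℝ} (hr : 0 ≤ r) (w z : ℂ) :
    quadLog (η + r) (r * ‖w‖) (η * f) ‖z‖ + r / 2 * ‖w‖ ^ 2 ≤ poissonProxObjective η r f w z := by
  have hdist : (‖z‖ - ‖w‖) ^ 2 ≤ ‖z - w‖ ^ 2 := by
    rw [← sq_abs]
    exact pow_le_pow_left₀ (abs_nonneg _) (abs_norm_sub_norm_le z w) 2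
  rw [poissonProxObjective, quadLog, log_pow]
  push_cast
  nlinarith [mul_le_mul_of_nonneg_left hdist hr]

end

/-- Closed-form solution, per coordinate, of the `z`-subproblem
`min_z (η/2)(|z|² − f·log|z|²) + (r/2)|z − w|²` arising in the ADMM for Poisson
phase retrieval. -/
theorem poisson_prox_closed_form (η r f : ℝ) (hη : 0 < η) (hr : 0 < r) (hf : 0 ≤ f)
    (w : ℂ) (hw : w ≠ 0) :
    ∀ z : ℂ, z ≠ 0 →
      (η / 2) * (‖(((((r * ‖w‖ +
            Real.sqrt (r ^ 2 * ‖w‖ ^ 2 + 4 * η * (η + r) * f)) /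
              (2 * (η + r)) : ℝ) : ℂ)) * (w / (‖w‖ : ℂ)))‖ ^ 2
          - f * Real.log (‖(((((r * ‖w‖ +
              Real.sqrt (r ^ 2 * ‖w‖ ^ 2 + 4 * η * (η + r) * f)) /
                (2 * (η + r)) : ℝ) : ℂ)) * (w / (‖w‖ : ℂ)))‖ ^ 2))
        + (r / 2) * ‖((((((r * ‖w‖ +
            Real.sqrt (r ^ 2 * ‖w‖ ^ 2 + 4 * η * (η + r) * f)) /
              (2 * (η + r)) : ℝ) : ℂ)) * (w / (‖w‖ : ℂ))) - w)‖ ^ 2 ≤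
      (η / 2) * (‖z‖ ^ 2 - f * Real.log (‖z‖ ^ 2))
        + (r / 2) * ‖(z - w)‖ ^ 2 := by
  intro z hz
  set ρ := (r * ‖w‖ + √(r ^ 2 * ‖w‖ ^ 2 + 4 * η * (η + r) * f)) / (2 * (η + r)) with hρ_def
  have hw_pos : 0 < ‖w‖ := norm_pos_iff.mpr hw
  have hρ : 0 < ρ := by positivity
  have hroot : (η + r) * ρ ^ 2 = r * ‖w‖ * ρ + η * f :=
    mul_sq_eq_of_eq_add_sqrt_div (by positivity) (by positivity) (by rw [hρ_def]; ring_nf)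
  have hmin := isMinOn_quadLog (by positivity) (by positivity) hρ hroot
  change poissonProxObjective η r f w ((ρ : ℂ) * (w / (‖w‖ : ℂ))) ≤ poissonProxObjective η r f w z
  calc poissonProxObjective η r f w ((ρ : ℂ) * (w / (‖w‖ : ℂ)))
      = quadLog (η + r) (r * ‖w‖) (η * f) ρ + r / 2 * ‖w‖ ^ 2 :=
        poissonProxObjective_ofReal_mul_div_norm η r f hw ρ
    _ ≤ quadLog (η + r) (r * ‖w‖) (η * f) ‖z‖ + r / 2 * ‖w‖ ^ 2 :=
        add_le_add_left (hmin (norm_pos_iff.mpr hz)) _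
    _ ≤ poissonProxObjective η r f w z := quadLog_norm_le_poissonProxObjective η f hr.le w z
end

section
/- Let τ > 0 and b ∈ ℂ. Define â = T(Re b) + i·T(Im b), where for a real number x, T(x) = x if |x| > √(2τ) and T(x) = 0 otherwise. Then for every a ∈ ℂ: (1/2)·|â − b|² + τ·( 𝟙_{Re â ≠ 0} + 𝟙_{Im â ≠ 0} ) ≤ (1/2)·|a − b|² + τ·( 𝟙_{Re a ≠ 0} + 𝟙_{Im a ≠ 0} ). That is, separately hard thresholding the real and imaginary parts at level √(2τ) gives a global minimizer for the anisotropic L⁰ penalty. -/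
/-!
On a real coordinate the objective `y ↦ (1/2)(y - x)² + τ·𝟙_{y ≠ 0}` equals `x²/2` at `y = 0`
and is at least `τ` elsewhere, with equality at `y = x`; hard thresholding at `√(2τ)` picks
whichever of these two values is smaller. The complex objective with the anisotropic penalty is
the sum of the real objectives of the real and imaginary parts, so it is minimized coordinatewise.
-/

noncomputable def l0Objective (τ x y : ℝ) : ℝ :=
  (1 / 2) * (y - x) ^ 2 + τ * (if y = 0 then 0 else 1)

noncomputable def hardThreshold (t x : ℝ) : ℝ :=
  if t < |x| then x else 0

lemma l0Objective_zero (τ x : ℝ) : l0Objective τ x 0 = x ^ 2 / 2 := by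
  simp only [l0Objective, if_true, mul_zero, add_zero, zero_sub, neg_sq]
  ring

lemma le_l0Objective_of_ne_zero {τ x y : ℝ} (hy : y ≠ 0) :
    τ ≤ l0Objective τ x y := by
  simp only [l0Objective, hy, if_false, mul_one]
  linarith [sq_nonneg (y - x)]

lemma l0Objective_hardThreshold_le_sq_div_two (τ x : ℝ) :
    l0Objective τ x (hardThreshold (Real.sqrt (2 * τ)) x) ≤ x ^ 2 / 2 := by
  unfold hardThreshold
  split_ifs with h
  · have hsq : 2 * τ < x ^ 2 := sq_abs x ▸ Real.lt_sq_of_sqrt_lt h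
    have hx : x ≠ 0 := abs_pos.mp ((Real.sqrt_nonneg _).trans_lt h)
    simp only [l0Objective, hx, if_false, sub_self]
    linarith
  · exact (l0Objective_zero τ x).le

lemma l0Objective_hardThreshold_le {τ : ℝ} (hτ : 0 ≤ τ) (x : ℝ) :
    l0Objective τ x (hardThreshold (Real.sqrt (2 * τ)) x) ≤ τ := by
  unfold hardThreshold
  split_ifs with h
  · simp only [l0Objective, sub_self]
    split_ifs <;> linarith
  · have hsq : x ^ 2 ≤ 2 * τ :=
      sq_abs x ▸ (Real.le_sqrt (abs_nonneg x) (by linarith)).mp (not_lt.mp h)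
    rw [l0Objective_zero]
    linarith

theorem l0Objective_hardThreshold_le_l0Objective {τ : ℝ} (hτ : 0 ≤ τ) (x y : ℝ) :
    l0Objective τ x (hardThreshold (Real.sqrt (2 * τ)) x) ≤ l0Objective τ x y := by
  by_cases hy : y = 0
  · rw [hy, l0Objective_zero]
    exact l0Objective_hardThreshold_le_sq_div_two τ x
  · exact (l0Objective_hardThreshold_le hτ x).trans (le_l0Objective_of_ne_zero hy)

lemma half_norm_sub_sq_add_anisoL0_eq (τ : ℝ) (a b : ℂ) :
    (1 / 2) * ‖a - b‖ ^ 2 + τ * ((if a.re = 0 then 0 else 1) + (if a.im = 0 then 0 else 1)) =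
      l0Objective τ b.re a.re + l0Objective τ b.im a.im := by
  rw [Complex.sq_norm, Complex.normSq_apply]
  simp only [l0Objective, Complex.sub_re, Complex.sub_im]
  ring

open Classical in
/-- Separately hard thresholding the real and imaginary parts at level `√(2τ)`
gives a global minimizer of the scalar proximal problem for the anisotropic `L⁰`
penalty `a ↦ (1/2)|a − b|² + τ(𝟙_{Re a ≠ 0} + 𝟙_{Im a ≠ 0})`. -/
theorem hard_thresholding_aniso_scalar_minimizer (τ : ℝ) (hτ : 0 < τ) (b : ℂ)
    (ahat : ℂ)
    (hahat : ahat =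
      ((if Real.sqrt (2 * τ) < |b.re| then b.re else 0 : ℝ) : ℂ) +
        Complex.I * ((if Real.sqrt (2 * τ) < |b.im| then b.im else 0 : ℝ) : ℂ)) :
    ∀ a : ℂ,
      (1 / 2) * ‖ahat - b‖ ^ 2
          + τ * ((if ahat.re = 0 then 0 else 1) + (if ahat.im = 0 then 0 else 1)) ≤
      (1 / 2) * ‖a - b‖ ^ 2
          + τ * ((if a.re = 0 then 0 else 1) + (if a.im = 0 then 0 else 1)) := by
  intro a
  have hre : ahat.re = hardThreshold (Real.sqrt (2 * τ)) b.re := by simp [hahat, hardThreshold]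
  have him : ahat.im = hardThreshold (Real.sqrt (2 * τ)) b.im := by simp [hahat, hardThreshold]
  rw [half_norm_sub_sq_add_anisoL0_eq, half_norm_sub_sq_add_anisoL0_eq, hre, him]
  exact add_le_add (l0Objective_hardThreshold_le_l0Objective hτ.le b.re a.re)
    (l0Objective_hardThreshold_le_l0Objective hτ.le b.im a.im)
end

section
/- Let n be a positive integer and B, U, V, Σ ∈ M_n(ℂ) with U and V unitary, Σ a diagonal matrix whose diagonal entries σ_0, …, σ_{n−1} are nonnegative real numbers, and B = U·Σ·Vᴴ. Then for every unitary D ∈ M_n(ℂ): Re( trace(Dᴴ·B) ) ≤ Σ_{i<n} σ_i, and equality holds for D = U·Vᴴ. -/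
/-!
Writing `W = Vᴴ Dᴴ U`, which is unitary, cyclicity of the trace gives
`trace (Dᴴ B) = trace (W Σ) = ∑ᵢ Wᵢᵢ σᵢ`. Entries of a unitary matrix have norm at most `1`,
so `Re Wᵢᵢ ≤ 1` and the sum is at most `∑ᵢ σᵢ` because `σᵢ ≥ 0`. For `D = U Vᴴ` one gets `W = 1`.
-/

open Matrix

section

variable {n : Type*} [Fintype n]

theorem Matrix.trace_mul_mul_mul_eq_trace_mul {R : Type*} [CommSemiring R]
    (A U S X : Matrix n n R) : (A * (U * S * X)).trace = (X * A * U * S).trace := by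
  rw [← Matrix.mul_assoc, ← Matrix.mul_assoc, trace_mul_comm, ← Matrix.mul_assoc,
    ← Matrix.mul_assoc]

variable {𝕜 : Type*} [RCLike 𝕜] [DecidableEq n]

theorem Matrix.re_trace_mul_diagonal_le_of_mem_unitaryGroup {W : Matrix n n 𝕜}
    (hW : W ∈ unitaryGroup n 𝕜) {σ : n → ℝ} (hσ : ∀ i, 0 ≤ σ i) :
    RCLike.re (W * diagonal fun i => (σ i : 𝕜)).trace ≤ ∑ i, σ i := by
  have hdiag (i : n) : RCLike.re (W i i) ≤ 1 :=
    (RCLike.re_le_norm _).trans (entry_norm_bound_of_unitary hW i i)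
  simp only [trace, diag_apply, mul_diagonal, map_sum, RCLike.re_mul_ofReal]
  exact Finset.sum_le_sum fun i _ => mul_le_of_le_one_left (hσ i) (hdiag i)

end

theorem trace_inequality_svd_general {n : ℕ}
    (B U V : Matrix (Fin n) (Fin n) ℂ) (σ : Fin n → ℝ) (hσ : ∀ i, 0 ≤ σ i)
    (hU : Uᴴ * U = 1) (hV : Vᴴ * V = 1)
    (hB : B = U * Matrix.diagonal (fun i => (σ i : ℂ)) * Vᴴ) :
    (∀ D : Matrix (Fin n) (Fin n) ℂ, Dᴴ * D = 1 →
        ((Dᴴ * B).trace).re ≤ ∑ i, σ i) ∧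
      (((U * Vᴴ)ᴴ * B).trace).re = ∑ i, σ i := by
  have hU_mem : U ∈ unitaryGroup (Fin n) ℂ := mem_unitaryGroup_iff'.mpr hU
  have hV_mem : V ∈ unitaryGroup (Fin n) ℂ := mem_unitaryGroup_iff'.mpr hV
  subst hB
  constructor
  · intro D hD
    have hD_mem : D ∈ unitaryGroup (Fin n) ℂ := mem_unitaryGroup_iff'.mpr hD
    have hW : Vᴴ * Dᴴ * U ∈ unitaryGroup (Fin n) ℂ :=
      mul_mem (mul_mem (Unitary.star_mem hV_mem) (Unitary.star_mem hD_mem)) hU_mem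
    rw [trace_mul_mul_mul_eq_trace_mul]
    exact re_trace_mul_diagonal_le_of_mem_unitaryGroup hW hσ
  · have hW : Vᴴ * (U * Vᴴ)ᴴ * U = 1 := by
      rw [conjTranspose_mul, conjTranspose_conjTranspose, ← Matrix.mul_assoc, hV,
        Matrix.one_mul, hU]
    rw [trace_mul_mul_mul_eq_trace_mul, hW, Matrix.one_mul, trace_diagonal, Complex.re_sum]
    simp

/-- Trace inequality at the core of the Procrustes solution: if `B = U Σ Vᴴ` is a
singular value decomposition with nonnegative singular values `σ`, then for every
unitary `D`, `Re(trace(Dᴴ B)) ≤ Σ σ_i`, with equality at `D = U Vᴴ`. -/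
theorem trace_inequality_svd {n : ℕ} (hn : 0 < n)
    (B U V : Matrix (Fin n) (Fin n) ℂ) (σ : Fin n → ℝ) (hσ : ∀ i, 0 ≤ σ i)
    (hU : Uᴴ * U = 1) (hV : Vᴴ * V = 1)
    (hB : B = U * Matrix.diagonal (fun i => (σ i : ℂ)) * Vᴴ) :
    (∀ D : Matrix (Fin n) (Fin n) ℂ, Dᴴ * D = 1 →
        ((Dᴴ * B).trace).re ≤ ∑ i, σ i) ∧
      (((U * Vᴴ)ᴴ * B).trace).re = ∑ i, σ i :=
  trace_inequality_svd_general B U V σ hσ hU hV hB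
end

section
/- Let l, d be positive integers, α, Y ∈ M_{l×d}(ℂ), and suppose Y·αᴴ = U·Σ·Vᴴ where U, V ∈ M_l(ℂ) are unitary and Σ ∈ M_l(ℂ) is diagonal with nonnegative real diagonal entries. Then D̂ = U·Vᴴ minimizes the representation error over all unitary matrices: for every D ∈ M_l(ℂ) with Dᴴ D = I, ‖(U·Vᴴ)·α − Y‖_F ≤ ‖D·α − Y‖_F. -/
/-!
Since a unitary `D` preserves the Frobenius norm, `‖Dα - Y‖² = ‖α‖² + ‖Y‖² - 2 Re tr(D α Yᴴ)`,
so it suffices to maximize `Re tr(D α Yᴴ)`. With `α Yᴴ = V Σ Uᴴ` this is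
`Re tr(W Σ) = ∑ σᵢ Re Wᵢᵢ` for the unitary `W = Uᴴ D V`; entries of a unitary matrix have
modulus at most `1`, so it is at most `∑ σᵢ`, which is attained by `W = 1`, i.e. `D = U Vᴴ`.
-/

open Matrix RCLike ComplexConjugate

namespace Matrix

variable {𝕜 m n : Type*} [RCLike 𝕜] [Fintype m] [Fintype n]

theorem sum_norm_sq_eq_re_trace_conjTranspose_mul_self (A : Matrix m n 𝕜) :
    ∑ i, ∑ j, ‖A i j‖ ^ 2 = re (trace (Aᴴ * A)) := by
  rw [Finset.sum_comm]
  simp only [trace, diag, mul_apply, conjTranspose_apply, RCLike.star_def, RCLike.conj_mul,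
    map_sum, ← ofReal_pow, ofReal_re]

theorem sum_norm_sq_sub_eq (A B : Matrix m n 𝕜) :
    ∑ i, ∑ j, ‖A i j - B i j‖ ^ 2 =
      ∑ i, ∑ j, ‖A i j‖ ^ 2 + ∑ i, ∑ j, ‖B i j‖ ^ 2 - 2 * re (trace (A * Bᴴ)) := by
  have hpt (z w : 𝕜) : ‖z - w‖ ^ 2 = ‖z‖ ^ 2 + ‖w‖ ^ 2 - 2 * re (z * conj w) := by
    rw [@norm_sub_sq 𝕜, inner_apply, ← conj_re, map_mul, conj_conj, mul_comm (conj w)]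
    ring
  simp only [hpt, Finset.sum_add_distrib, Finset.sum_sub_distrib, ← Finset.mul_sum,
    trace, diag, mul_apply, conjTranspose_apply, map_sum, RCLike.star_def]

theorem trace_mul_mul_mul_conjTranspose (D U V S : Matrix m m 𝕜) :
    trace (D * (V * S * Uᴴ)) = trace (Uᴴ * D * V * S) := by
  rw [← Matrix.mul_assoc, trace_mul_comm]
  simp only [Matrix.mul_assoc]

variable [DecidableEq m]

theorem sum_norm_sq_unitary_mul {D : Matrix m m 𝕜} (hD : D ∈ unitaryGroup m 𝕜)
    (A : Matrix m n 𝕜) : ∑ i, ∑ j, ‖(D * A) i j‖ ^ 2 = ∑ i, ∑ j, ‖A i j‖ ^ 2 := by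
  rw [sum_norm_sq_eq_re_trace_conjTranspose_mul_self,
    sum_norm_sq_eq_re_trace_conjTranspose_mul_self, conjTranspose_mul, Matrix.mul_assoc,
    ← Matrix.mul_assoc Dᴴ, ← star_eq_conjTranspose, mem_unitaryGroup_iff'.1 hD, Matrix.one_mul]

theorem re_trace_mul_diagonal_le_sum {W : Matrix m m 𝕜} (hW : W ∈ unitaryGroup m 𝕜)
    {σ : m → ℝ} (hσ : ∀ i, 0 ≤ σ i) :
    re (trace (W * diagonal fun i => (σ i : 𝕜))) ≤ ∑ i, σ i := by
  simp only [trace, diag, mul_diagonal, map_sum, re_mul_ofReal]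
  gcongr with i
  exact mul_le_of_le_one_left (hσ i) ((re_le_norm _).trans (entry_norm_bound_of_unitary hW i i))

theorem re_trace_mul_le_of_svd {U V D : Matrix m m 𝕜} (hU : U ∈ unitaryGroup m 𝕜)
    (hV : V ∈ unitaryGroup m 𝕜) (hD : D ∈ unitaryGroup m 𝕜) {σ : m → ℝ} (hσ : ∀ i, 0 ≤ σ i) :
    re (trace (D * (V * diagonal (fun i => (σ i : 𝕜)) * Uᴴ))) ≤
      re (trace (U * Vᴴ * (V * diagonal (fun i => (σ i : 𝕜)) * Uᴴ))) := by
  have hW : Uᴴ * (U * Vᴴ) * V = 1 := by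
    rw [← Matrix.mul_assoc, ← star_eq_conjTranspose, mem_unitaryGroup_iff'.1 hU, Matrix.one_mul,
      ← star_eq_conjTranspose, mem_unitaryGroup_iff'.1 hV]
  rw [trace_mul_mul_mul_conjTranspose, trace_mul_mul_mul_conjTranspose, hW, Matrix.one_mul]
  have hUDV : Uᴴ * D * V ∈ unitaryGroup m 𝕜 := mul_mem (mul_mem (Unitary.star_mem hU) hD) hV
  refine (re_trace_mul_diagonal_le_sum hUDV hσ).trans_eq ?_
  simp [trace]

theorem sum_norm_sq_mul_sub_le_of_svd {α Y : Matrix m n 𝕜} {U V : Matrix m m 𝕜}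
    (hU : U ∈ unitaryGroup m 𝕜) (hV : V ∈ unitaryGroup m 𝕜) {σ : m → ℝ} (hσ : ∀ i, 0 ≤ σ i)
    (hsvd : Y * αᴴ = U * diagonal (fun i => (σ i : 𝕜)) * Vᴴ)
    {D : Matrix m m 𝕜} (hD : D ∈ unitaryGroup m 𝕜) :
    ∑ i, ∑ j, ‖(U * Vᴴ * α) i j - Y i j‖ ^ 2 ≤ ∑ i, ∑ j, ‖(D * α) i j - Y i j‖ ^ 2 := by
  have hαY : α * Yᴴ = V * diagonal (fun i => (σ i : 𝕜)) * Uᴴ := by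
    simpa [Matrix.mul_assoc, Pi.star_def, RCLike.star_def] using congrArg conjTranspose hsvd
  have hUV : U * Vᴴ ∈ unitaryGroup m 𝕜 := mul_mem hU (Unitary.star_mem hV)
  rw [sum_norm_sq_sub_eq, sum_norm_sq_sub_eq, sum_norm_sq_unitary_mul hUV,
    sum_norm_sq_unitary_mul hD, Matrix.mul_assoc, Matrix.mul_assoc D, hαY]
  linarith [re_trace_mul_le_of_svd hU hV hD hσ]

end Matrix

theorem dictionary_update_closed_form_general {l d : ℕ}
    (α Y : Matrix (Fin l) (Fin d) ℂ) (U V : Matrix (Fin l) (Fin l) ℂ)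
    (σ : Fin l → ℝ) (hσ : ∀ i, 0 ≤ σ i)
    (hU : Uᴴ * U = 1) (hV : Vᴴ * V = 1)
    (hsvd : Y * αᴴ = U * Matrix.diagonal (fun i => (σ i : ℂ)) * Vᴴ) :
    ∀ D : Matrix (Fin l) (Fin l) ℂ, Dᴴ * D = 1 →
      Real.sqrt (∑ s : Fin l, ∑ t : Fin d, ‖((U * Vᴴ) * α) s t - Y s t‖ ^ 2) ≤
      Real.sqrt (∑ s : Fin l, ∑ t : Fin d, ‖(D * α) s t - Y s t‖ ^ 2) := fun _ hD =>
  Real.sqrt_le_sqrt <| sum_norm_sq_mul_sub_le_of_svd (mem_unitaryGroup_iff'.2 hU)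
    (mem_unitaryGroup_iff'.2 hV) hσ hsvd (mem_unitaryGroup_iff'.2 hD)

/-- Closed-form solution of the orthogonal-dictionary update subproblem: if
`Y αᴴ = U Σ Vᴴ` is a singular value decomposition, then `D̂ = U Vᴴ` minimizes the
Frobenius representation error `‖Dα − Y‖_F` over all unitary matrices `D`. -/
theorem dictionary_update_closed_form {l d : ℕ} (hl : 0 < l) (hd : 0 < d)
    (α Y : Matrix (Fin l) (Fin d) ℂ) (U V : Matrix (Fin l) (Fin l) ℂ)
    (σ : Fin l → ℝ) (hσ : ∀ i, 0 ≤ σ i)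
    (hU : Uᴴ * U = 1) (hV : Vᴴ * V = 1)
    (hsvd : Y * αᴴ = U * Matrix.diagonal (fun i => (σ i : ℂ)) * Vᴴ) :
    ∀ D : Matrix (Fin l) (Fin l) ℂ, Dᴴ * D = 1 →
      Real.sqrt (∑ s : Fin l, ∑ t : Fin d, ‖((U * Vᴴ) * α) s t - Y s t‖ ^ 2) ≤
      Real.sqrt (∑ s : Fin l, ∑ t : Fin d, ‖(D * α) s t - Y s t‖ ^ 2) :=
  dictionary_update_closed_form_general α Y U V σ hσ hU hV hsvd
end

section
/- Let n be a positive integer, B ∈ M_n(ℂ), and suppose B = U·Σ·Vᴴ where U, V ∈ M_n(ℂ) are unitary and Σ is diagonal with nonnegative real diagonal entries. Then U·Vᴴ is a nearest unitary matrix to B in Frobenius norm: for every unitary D ∈ M_n(ℂ), ‖U·Vᴴ − B‖_F ≤ ‖D − B‖_F. -/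
/-!
For unitary `D`, expanding the square gives
`‖D - B‖_F² = n + ‖B‖_F² - 2 Re tr (Dᴴ B)`, so a nearest unitary matrix maximises
`Re tr (Dᴴ B) = Re tr (W Σ)` with `W = Vᴴ Dᴴ U` unitary. Entries of a unitary matrix have
modulus at most `1`, so `Re tr (W Σ) ≤ ∑ σᵢ`, with equality for `W = 1`, i.e. `D = U Vᴴ`.
-/

open Matrix

namespace Matrix

variable {m n 𝕜 : Type*} [Fintype m] [Fintype n] [RCLike 𝕜]

theorem sum_sum_norm_sq_eq_re_trace (A : Matrix m n 𝕜) :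
    ∑ i, ∑ j, ‖A i j‖ ^ 2 = RCLike.re (trace (Aᴴ * A)) := by
  simp [trace, mul_apply, RCLike.conj_mul, Finset.sum_comm (γ := m)]

variable [DecidableEq m]

theorem sum_sum_norm_sub_sq_of_mem_unitaryGroup {D : Matrix m m 𝕜}
    (hD : D ∈ unitaryGroup m 𝕜) (B : Matrix m m 𝕜) :
    ∑ i, ∑ j, ‖D i j - B i j‖ ^ 2 =
      Fintype.card m + ∑ i, ∑ j, ‖B i j‖ ^ 2 - 2 * RCLike.re (trace (Dᴴ * B)) := by
  have hDD : Dᴴ * D = 1 := mem_unitaryGroup_iff'.1 hD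
  have hBD : trace (Bᴴ * D) = star (trace (Dᴴ * B)) := by
    rw [← trace_conjTranspose, conjTranspose_mul, conjTranspose_conjTranspose]
  simp only [← sub_apply, sum_sum_norm_sq_eq_re_trace, conjTranspose_sub, sub_mul, mul_sub,
    trace_sub, hDD, trace_one, hBD, map_sub, RCLike.star_def, RCLike.conj_re, RCLike.natCast_re]
  ring

theorem re_trace_mul_diagonal_le_sum_norm {W : Matrix m m 𝕜} (hW : W ∈ unitaryGroup m 𝕜)
    (d : m → 𝕜) : RCLike.re (trace (W * diagonal d)) ≤ ∑ i, ‖d i‖ := by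
  simp only [trace, diag_apply, mul_diagonal, map_sum]
  refine Finset.sum_le_sum fun i _ => ?_
  calc RCLike.re (W i i * d i) ≤ ‖W i i * d i‖ := RCLike.re_le_norm _
    _ = ‖W i i‖ * ‖d i‖ := norm_mul _ _
    _ ≤ ‖d i‖ := mul_le_of_le_one_left (norm_nonneg _) (entry_norm_bound_of_unitary hW i i)

theorem re_trace_conjTranspose_mul_le_sum_norm {U V D : Matrix m m 𝕜}
    (hU : U ∈ unitaryGroup m 𝕜) (hV : V ∈ unitaryGroup m 𝕜) (hD : D ∈ unitaryGroup m 𝕜)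
    (d : m → 𝕜) : RCLike.re (trace (Dᴴ * (U * diagonal d * Vᴴ))) ≤ ∑ i, ‖d i‖ := by
  have hW : Vᴴ * Dᴴ * U ∈ unitaryGroup m 𝕜 :=
    mul_mem (mul_mem (Unitary.star_mem hV) (Unitary.star_mem hD)) hU
  calc RCLike.re (trace (Dᴴ * (U * diagonal d * Vᴴ)))
      = RCLike.re (trace (Vᴴ * Dᴴ * U * diagonal d)) := by
        rw [← mul_assoc, ← mul_assoc, trace_mul_comm, ← mul_assoc, ← mul_assoc]
    _ ≤ ∑ i, ‖d i‖ := re_trace_mul_diagonal_le_sum_norm hW d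

theorem trace_conjTranspose_mul_eq_sum {U V : Matrix m m 𝕜}
    (hU : U ∈ unitaryGroup m 𝕜) (hV : V ∈ unitaryGroup m 𝕜) (d : m → 𝕜) :
    trace ((U * Vᴴ)ᴴ * (U * diagonal d * Vᴴ)) = ∑ i, d i := by
  have hUU : Uᴴ * U = 1 := mem_unitaryGroup_iff'.1 hU
  have hVV : Vᴴ * V = 1 := mem_unitaryGroup_iff'.1 hV
  calc trace ((U * Vᴴ)ᴴ * (U * diagonal d * Vᴴ))
      = trace (V * (Uᴴ * U) * diagonal d * Vᴴ) := by
        rw [conjTranspose_mul, conjTranspose_conjTranspose]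
        simp only [mul_assoc]
    _ = trace (Vᴴ * V * diagonal d) := by rw [hUU, mul_one, trace_mul_cycle]
    _ = ∑ i, d i := by rw [hVV, one_mul, trace_diagonal]

end Matrix

theorem nearest_unitary_closed_form_general {n : ℕ}
    (B U V : Matrix (Fin n) (Fin n) ℂ) (σ : Fin n → ℝ) (hσ : ∀ i, 0 ≤ σ i)
    (hU : Uᴴ * U = 1) (hV : Vᴴ * V = 1)
    (hB : B = U * Matrix.diagonal (fun i => (σ i : ℂ)) * Vᴴ) :
    ∀ D : Matrix (Fin n) (Fin n) ℂ, Dᴴ * D = 1 →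
      Real.sqrt (∑ s : Fin n, ∑ t : Fin n, ‖(U * Vᴴ) s t - B s t‖ ^ 2) ≤
      Real.sqrt (∑ s : Fin n, ∑ t : Fin n, ‖D s t - B s t‖ ^ 2) := by
  intro D hD
  replace hU : U ∈ unitaryGroup (Fin n) ℂ := mem_unitaryGroup_iff'.2 hU
  replace hV : V ∈ unitaryGroup (Fin n) ℂ := mem_unitaryGroup_iff'.2 hV
  replace hD : D ∈ unitaryGroup (Fin n) ℂ := mem_unitaryGroup_iff'.2 hD
  have hUV : U * Vᴴ ∈ unitaryGroup (Fin n) ℂ := mul_mem hU (Unitary.star_mem hV)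
  have hnorm : ∑ i, ‖(σ i : ℂ)‖ = ∑ i, σ i :=
    Finset.sum_congr rfl fun i _ => Complex.norm_of_nonneg (hσ i)
  have hD_le := re_trace_conjTranspose_mul_le_sum_norm hU hV hD fun i => (σ i : ℂ)
  have hUV_eq := trace_conjTranspose_mul_eq_sum hU hV fun i => (σ i : ℂ)
  apply Real.sqrt_le_sqrt
  rw [sum_sum_norm_sub_sq_of_mem_unitaryGroup hUV, sum_sum_norm_sub_sq_of_mem_unitaryGroup hD,
    hB, hUV_eq]
  simp only [hnorm, RCLike.re_to_complex, Complex.re_sum, Complex.ofReal_re] at hD_le ⊢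
  linarith

/-- Nearest unitary matrix: if `B = U Σ Vᴴ` is a singular value decomposition with
nonnegative singular values, then `U Vᴴ` is a nearest unitary matrix to `B` in
Frobenius norm. -/
theorem nearest_unitary_closed_form {n : ℕ} (hn : 0 < n)
    (B U V : Matrix (Fin n) (Fin n) ℂ) (σ : Fin n → ℝ) (hσ : ∀ i, 0 ≤ σ i)
    (hU : Uᴴ * U = 1) (hV : Vᴴ * V = 1)
    (hB : B = U * Matrix.diagonal (fun i => (σ i : ℂ)) * Vᴴ) :
    ∀ D : Matrix (Fin n) (Fin n) ℂ, Dᴴ * D = 1 →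
      Real.sqrt (∑ s : Fin n, ∑ t : Fin n, ‖(U * Vᴴ) s t - B s t‖ ^ 2) ≤
      Real.sqrt (∑ s : Fin n, ∑ t : Fin n, ‖D s t - B s t‖ ^ 2) :=
  nearest_unitary_closed_form_general B U V σ hσ hU hV hB
end

section
/- Let E be a real inner product space, h : E → ℝ, σ : E → ℝ, x ∈ E, G ∈ E, and L ≥ 0, t > L. Assume the descent inequality: for all y ∈ E, h(y) ≤ h(x) + ⟨G, y − x⟩ + (L/2)·‖y − x‖². Let u⁺ ∈ E be a global minimizer of u ↦ σ(u) + (t/2)·‖u − (x − t⁻¹·G)‖². Then h(u⁺) + σ(u⁺) ≤ h(x) + σ(x) − ((t − L)/2)·‖u⁺ − x‖². -/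
open scoped RealInnerProductSpace

/-- Sufficient-decrease property of a proximal-linearized step: if `h` satisfies the
descent inequality at `x` with gradient surrogate `G` and modulus `L`, and `u⁺` is a
global minimizer of the proximal subproblem with step size `t > L`, then
`h(u⁺) + σ(u⁺) ≤ h(x) + σ(x) − ((t − L)/2)‖u⁺ − x‖²`. -/
theorem prox_linearized_sufficient_decrease {E : Type*} [NormedAddCommGroup E]
    [InnerProductSpace ℝ E] (h σ : E → ℝ) (x G : E) (L t : ℝ) (hL : 0 ≤ L)
    (ht : L < t)
    (hdesc : ∀ y : E, h y ≤ h x + ⟪G, y - x⟫ + (L / 2) * ‖y - x‖ ^ 2)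
    (uplus : E)
    (hmin : ∀ u : E,
        σ uplus + (t / 2) * ‖uplus - (x - t⁻¹ • G)‖ ^ 2 ≤
        σ u + (t / 2) * ‖u - (x - t⁻¹ • G)‖ ^ 2) :
    h uplus + σ uplus ≤ h x + σ x - ((t - L) / 2) * ‖uplus - x‖ ^ 2 := by
  have ht0 : 0 < t := hL.trans_lt ht
  have hm := hmin x
  have e1 : uplus - (x - t⁻¹ • G) = (uplus - x) + t⁻¹ • G := by abel
  have e2 : x - (x - t⁻¹ • G) = t⁻¹ • G := by abel
  rw [e1, e2, norm_add_sq_real] at hm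
  have hinner : ⟪uplus - x, t⁻¹ • G⟫ = t⁻¹ * ⟪G, uplus - x⟫ := by
    rw [real_inner_smul_right, real_inner_comm]
  rw [hinner] at hm
  have hd := hdesc uplus
  have htt : t * t⁻¹ = 1 := mul_inv_cancel₀ ht0.ne'
  have key : (t/2) * (2 * (t⁻¹ * ⟪G, uplus - x⟫)) = ⟪G, uplus - x⟫ := by
    field_simp
  nlinarith [hm, hd, key]
end
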